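/- Let E be a real Hilbert space, γ > 0, and 0 < μ ≤ 1/γ. Let (L_t)_{t ∈ ℕ} be a sequence of nonnegative differentiable functions L_t : E → ℝ whose gradients ∇L_t are all γ-Lipschitz, let (v_t)_{t ∈ ℕ} be a sequence in E, and define θ_{t+1} := θ_t − μ·v_t from an initial point θ_0 ∈ E. Assume that for every t, L_{t+1}(θ_{t+1}) ≤ L_t(θ_{t+1}). Suppose moreover there exist T_ε, T ∈ ℕ with T_ε < T and a constant c ≥ 0 such that ‖∇L_t(θ_t) − ∇L_T(θ_T)‖ ≤ c for all t with T_ε ≤ t < T, and c ≤ ‖∇L_T(θ_T)‖. Then ((T − T_ε)/T)·(‖∇L_T(θ_T)‖ − c)² ≤ 2·L_0(θ_0)/(μ·T) + (1/T)·Σ_{t=0}^{T−1} ‖v_t − ∇L_t(θ_t)‖². (Exact-constant deterministic core of the convergence theorem: the final gradient norm is controlled by an O(1/T) term plus the average squared update error, up to the gradient-stability constant c near the end of training.) -/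

import Mathlib

/-!
Since `∇L_t` is `γ`-Lipschitz and `μγ ≤ 1`, one step `θ ↦ θ - μ v` of inexact gradient descent
decreases `L_t` by at least `μ/2 ‖∇L_t‖²`, up to the error term `μ/2 ‖v - ∇L_t‖²`. Passing from
`L_t` to `L_{t+1}` can only decrease the loss further, so summing and using `L_T ≥ 0` bounds
`Σ_{t<T} ‖∇L_t(θ_t)‖²` by `2 L_0(θ_0)/μ` plus the accumulated error. On the last `T - T_ε` steps
each gradient is within `c` of `∇L_T(θ_T)`, so each of those terms is at least
`(‖∇L_T(θ_T)‖ - c)²`.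
-/

open Finset RealInnerProductSpace

section Descent

variable {E : Type*} [NormedAddCommGroup E] [InnerProductSpace ℝ E] [CompleteSpace E]
  {f : E → ℝ} {γ : ℝ}

theorem hasDerivAt_comp_add_smul {x d : E} {s : ℝ} (hf : DifferentiableAt ℝ f (x + s • d)) :
    HasDerivAt (fun s : ℝ => f (x + s • d)) ⟪gradient f (x + s • d), d⟫ s := by
  have hline : HasDerivAt (fun s : ℝ => x + s • d) d s := by
    simpa using ((hasDerivAt_id s).smul_const d).const_add x
  simpa [InnerProductSpace.toDual_apply_apply, Function.comp_def] using
    hf.hasGradientAt.hasFDerivAt.comp_hasDerivAt s hline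

theorem inner_gradient_add_smul_sub_le
    (hlip : ∀ x y : E, ‖gradient f x - gradient f y‖ ≤ γ * ‖x - y‖) (x d : E) {s : ℝ}
    (hs : 0 ≤ s) :
    ⟪gradient f (x + s • d) - gradient f x, d⟫ ≤ γ * ‖d‖ ^ 2 * s :=
  calc ⟪gradient f (x + s • d) - gradient f x, d⟫
      ≤ ‖gradient f (x + s • d) - gradient f x‖ * ‖d‖ := real_inner_le_norm _ _
    _ ≤ γ * ‖x + s • d - x‖ * ‖d‖ := by gcongr; exact hlip _ _
    _ = γ * ‖d‖ ^ 2 * s := by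
      rw [add_sub_cancel_left, norm_smul, Real.norm_of_nonneg hs]; ring

/-- The descent lemma. -/
theorem image_le_add_inner_gradient_add_sq (hf : Differentiable ℝ f)
    (hlip : ∀ x y : E, ‖gradient f x - gradient f y‖ ≤ γ * ‖x - y‖) (x y : E) :
    f y ≤ f x + ⟪gradient f x, y - x⟫ + γ / 2 * ‖y - x‖ ^ 2 := by
  set d := y - x
  set φ : ℝ → ℝ := fun s => f (x + s • d) - s * ⟪gradient f x, d⟫ - γ * ‖d‖ ^ 2 * s ^ 2 / 2
  have hφ : ∀ s : ℝ, HasDerivAt φ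
      (⟪gradient f (x + s • d) - gradient f x, d⟫ - γ * ‖d‖ ^ 2 * s) s := by
    intro s
    have hquad := ((hasDerivAt_pow 2 s).const_mul (γ * ‖d‖ ^ 2)).div_const 2
    refine (((hasDerivAt_comp_add_smul (hf _)).sub
      ((hasDerivAt_id s).mul_const ⟪gradient f x, d⟫)).sub hquad).congr_deriv ?_
    rw [inner_sub_left]
    ring
  have hanti : AntitoneOn φ (Set.Ici 0) := by
    refine antitoneOn_of_hasDerivWithinAt_nonpos (convex_Ici 0)
      (fun s _ => (hφ s).continuousAt.continuousWithinAt)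
      (fun s _ => (hφ s).hasDerivWithinAt) fun s hs => ?_
    rw [interior_Ici] at hs
    exact sub_nonpos.2 (inner_gradient_add_smul_sub_le hlip x d hs.le)
  have h01 : φ 1 ≤ φ 0 := hanti (Set.mem_Ici.2 le_rfl) (Set.mem_Ici.2 zero_le_one) zero_le_one
  simp only [φ, d, one_smul, add_sub_cancel, zero_smul, add_zero, one_pow, one_mul, zero_mul,
    sub_zero, ne_eq, OfNat.ofNat_ne_zero, not_false_eq_true, zero_pow, mul_zero, zero_div] at h01
  linarith

theorem image_sub_smul_le (hf : Differentiable ℝ f)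
    (hlip : ∀ x y : E, ‖gradient f x - gradient f y‖ ≤ γ * ‖x - y‖) {μ : ℝ} (hμ : 0 ≤ μ)
    (hγμ : γ * μ ≤ 1) (x v : E) :
    f (x - μ • v) ≤ f x - μ / 2 * ‖gradient f x‖ ^ 2 + μ / 2 * ‖v - gradient f x‖ ^ 2 := by
  have hdescent := image_le_add_inner_gradient_add_sq hf hlip x (x - μ • v)
  rw [sub_sub_cancel_left, norm_neg, norm_smul, Real.norm_of_nonneg hμ, inner_neg_right,
    real_inner_smul_right] at hdescent
  have hquad : γ / 2 * (μ * ‖v‖) ^ 2 ≤ μ / 2 * ‖v‖ ^ 2 := by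
    have : 0 ≤ μ / 2 * ‖v‖ ^ 2 := by positivity
    nlinarith
  rw [norm_sub_sq_real, real_inner_comm]
  linarith

end Descent

theorem add_sum_range_le_of_le_sub_add {a b e : ℕ → ℝ} (h : ∀ t, a (t + 1) ≤ a t - b t + e t)
    (n : ℕ) : a n + ∑ t ∈ range n, b t ≤ a 0 + ∑ t ∈ range n, e t := by
  induction n with
  | zero => simp
  | succ n ih =>
    rw [sum_range_succ, sum_range_succ]
    linarith [h n]

theorem sq_sub_le_norm_sq_of_norm_sub_le {F : Type*} [SeminormedAddCommGroup F] {x y : F}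
    {c : ℝ} (hxy : ‖x - y‖ ≤ c) (hc : c ≤ ‖y‖) : (‖y‖ - c) ^ 2 ≤ ‖x‖ ^ 2 := by
  have : ‖y‖ - c ≤ ‖x‖ := by linarith [norm_sub_norm_le y x, norm_sub_rev x y]
  gcongr

theorem sub_mul_le_sum_range {f : ℕ → ℝ} {a b : ℕ} {m : ℝ} (hab : a ≤ b)
    (hf : ∀ t, 0 ≤ f t) (hm : ∀ t, a ≤ t → t < b → m ≤ f t) :
    ((b : ℝ) - a) * m ≤ ∑ t ∈ range b, f t :=
  calc ((b : ℝ) - a) * m = #(Ico a b) • m := by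
        rw [Nat.card_Ico, nsmul_eq_mul, Nat.cast_sub hab]
    _ ≤ ∑ t ∈ Ico a b, f t :=
        card_nsmul_le_sum _ _ _ fun t ht => hm t (mem_Ico.1 ht).1 (mem_Ico.1 ht).2
    _ ≤ ∑ t ∈ range b, f t :=
        sum_le_sum_of_subset_of_nonneg (fun t ht => mem_range.2 (mem_Ico.1 ht).2)
          fun t _ _ => hf t

theorem convergence_deterministic_core_general
    {E : Type*} [NormedAddCommGroup E] [InnerProductSpace ℝ E] [CompleteSpace E]
    (γ : ℝ) (μ : ℝ) (hμ : 0 < μ) (hμγ : μ ≤ 1 / γ)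
    (L : ℕ → E → ℝ) (hL : ∀ t, Differentiable ℝ (L t))
    (hL0 : ∀ t x, 0 ≤ L t x)
    (hlip : ∀ t, ∀ x y : E, ‖gradient (L t) x - gradient (L t) y‖ ≤ γ * ‖x - y‖)
    (v : ℕ → E) (θ : ℕ → E)
    (hθ : ∀ t, θ (t + 1) = θ t - μ • v t)
    (hmono : ∀ t, L (t + 1) (θ (t + 1)) ≤ L t (θ (t + 1)))
    (Tε T : ℕ) (hTεT : Tε < T)
    (c : ℝ)
    (hstab : ∀ t, Tε ≤ t → t < T →
      ‖gradient (L t) (θ t) - gradient (L T) (θ T)‖ ≤ c)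
    (hcsmall : c ≤ ‖gradient (L T) (θ T)‖) :
    (((T : ℝ) - (Tε : ℝ)) / (T : ℝ)) * (‖gradient (L T) (θ T)‖ - c) ^ 2 ≤
      2 * L 0 (θ 0) / (μ * T)
        + (1 / (T : ℝ)) * ∑ t ∈ Finset.range T, ‖v t - gradient (L t) (θ t)‖ ^ 2 := by
  set g : ℕ → E := fun t => gradient (L t) (θ t)
  have hγμ : γ * μ ≤ 1 := by
    rwa [le_div_iff₀ (one_div_pos.1 (hμ.trans_le hμγ)), mul_comm] at hμγ
  have hstep : ∀ t, L (t + 1) (θ (t + 1)) ≤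
      L t (θ t) - μ / 2 * ‖g t‖ ^ 2 + μ / 2 * ‖v t - g t‖ ^ 2 := fun t =>
    (hmono t).trans (hθ t ▸ image_sub_smul_le (hL t) (hlip t) hμ.le hγμ _ _)
  have htel := add_sum_range_le_of_le_sub_add (a := fun t => L t (θ t)) hstep T
  rw [← mul_sum, ← mul_sum] at htel
  have hsum : ∑ t ∈ range T, ‖g t‖ ^ 2 ≤
      2 * L 0 (θ 0) / μ + ∑ t ∈ range T, ‖v t - g t‖ ^ 2 := by
    rw [← sub_le_iff_le_add, le_div_iff₀ hμ]
    linarith [hL0 T (θ T)]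
  have hlow : ((T : ℝ) - Tε) * (‖g T‖ - c) ^ 2 ≤ ∑ t ∈ range T, ‖g t‖ ^ 2 :=
    sub_mul_le_sum_range hTεT.le (fun _ => sq_nonneg _) fun t h₁ h₂ =>
      sq_sub_le_norm_sq_of_norm_sub_le (hstab t h₁ h₂) hcsmall
  have hT : (0 : ℝ) < T := by exact_mod_cast Nat.zero_lt_of_lt hTεT
  calc ((T : ℝ) - Tε) / T * (‖g T‖ - c) ^ 2 = ((T : ℝ) - Tε) * (‖g T‖ - c) ^ 2 / T := by ring
    _ ≤ (2 * L 0 (θ 0) / μ + ∑ t ∈ range T, ‖v t - g t‖ ^ 2) / T := by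
      gcongr; exact hlow.trans hsum
    _ = _ := by ring

/-- Exact-constant deterministic core of the convergence theorem: the final gradient
norm is controlled by an `O(1/T)` term plus the average squared update error, up to the
gradient-stability constant `c` near the end of training. -/
theorem convergence_deterministic_core
    {E : Type*} [NormedAddCommGroup E] [InnerProductSpace ℝ E] [CompleteSpace E]
    (γ : ℝ) (hγ : 0 < γ) (μ : ℝ) (hμ : 0 < μ) (hμγ : μ ≤ 1 / γ)
    (L : ℕ → E → ℝ) (hL : ∀ t, Differentiable ℝ (L t))
    (hL0 : ∀ t x, 0 ≤ L t x)
    (hlip : ∀ t, ∀ x y : E, ‖gradient (L t) x - gradient (L t) y‖ ≤ γ * ‖x - y‖)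
    (v : ℕ → E) (θ : ℕ → E)
    (hθ : ∀ t, θ (t + 1) = θ t - μ • v t)
    (hmono : ∀ t, L (t + 1) (θ (t + 1)) ≤ L t (θ (t + 1)))
    (Tε T : ℕ) (hTεT : Tε < T)
    (c : ℝ) (hc : 0 ≤ c)
    (hstab : ∀ t, Tε ≤ t → t < T →
      ‖gradient (L t) (θ t) - gradient (L T) (θ T)‖ ≤ c)
    (hcsmall : c ≤ ‖gradient (L T) (θ T)‖) :
    (((T : ℝ) - (Tε : ℝ)) / (T : ℝ)) * (‖gradient (L T) (θ T)‖ - c) ^ 2 ≤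
      2 * L 0 (θ 0) / (μ * T)
        + (1 / (T : ℝ)) * ∑ t ∈ Finset.range T, ‖v t - gradient (L t) (θ t)‖ ^ 2 :=
  convergence_deterministic_core_general γ μ hμ hμγ L hL hL0 hlip v θ hθ hmono Tε T hTεT c hstab
    hcsmall
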